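/- Let S(x) ∈ ℤ[[x]] satisfy S(x) = 1 + x·S(x) − x²·S(x)² with constant term 1, and let T(x) = Σ_{n≥1} (−1)^{n+1} F(n) x^n be the signed Fibonacci generating function. Then (x·S(x)) ∘ T = x, i.e., T(x) is the compositional inverse of x·S(x) in ℤ[[x]]. -/

import Mathlib

inductive MStep where
  | U : MStep
  | D : MStep
  | H : MStep
deriving DecidableEq

/-- A word in {U,D,H} is a Motzkin path if #U = #D and no prefix has more D's than U's. -/
def IsMotzkin (w : List MStep) : Prop :=
  w.count MStep.U = w.count MStep.D ∧
  ∀ p : List MStep, p <+: w → p.count MStep.D ≤ p.count MStep.U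

/-- Number of Motzkin paths of length n (the n-th Motzkin number). -/
noncomputable def motzkinNum (n : ℕ) : ℕ :=
  Nat.card {w : List MStep // w.length = n ∧ IsMotzkin w}

/-- Number of Motzkin paths of length n with an even number of U steps. -/
noncomputable def evenMotzkin (n : ℕ) : ℕ :=
  Nat.card {w : List MStep // w.length = n ∧ IsMotzkin w ∧ Even (w.count MStep.U)}

/-- Number of Motzkin paths of length n with an odd number of U steps. -/
noncomputable def oddMotzkin (n : ℕ) : ℕ :=
  Nat.card {w : List MStep // w.length = n ∧ IsMotzkin w ∧ Odd (w.count MStep.U)}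

/-- The shadow of the n-th Motzkin number: s(n) = a(n) - b(n). -/
noncomputable def shadow (n : ℕ) : ℤ :=
  (evenMotzkin n : ℤ) - (oddMotzkin n : ℤ)

/-- Composition f ∘ g of formal power series (intended for g with zero constant term). -/
noncomputable def PSComp (f g : PowerSeries ℤ) : PowerSeries ℤ :=
  PowerSeries.mk fun n =>
    PowerSeries.coeff n
      (∑ k ∈ Finset.range (n + 1), PowerSeries.C (PowerSeries.coeff k f) * g ^ k)

/-! Composition with a series `T` without constant term is a ring homomorphism (Mathlib's
`PowerSeries.subst`), so applying it to `S = 1 + X S - X² S²` shows that `B = (X S) ∘ T` solves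
`B = T (1 + B - B²)`. The Fibonacci recurrence says `T (1 + X - X²) = X`, i.e. `X` solves the same
equation. Two solutions `B, C` satisfy `(B - C) (1 - T (1 - B - C)) = 0`, and the second factor is
a unit, hence `B = X`. -/

namespace PowerSeries

theorem coeff_pow_eq_zero_of_lt {R : Type*} [CommRing R] {g : R⟦X⟧} (hg : constantCoeff g = 0)
    {n k : ℕ} (h : n < k) : coeff n (g ^ k) = 0 :=
  coeff_of_lt_order n <| (Nat.cast_lt.mpr h).trans_le (le_order_pow_of_constantCoeff_eq_zero k hg)

theorem eq_of_eq_mul_one_add_sub_sq {R : Type*} [CommRing R] {t b c : R⟦X⟧}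
    (ht : constantCoeff t = 0) (hb : b = t * (1 + b - b ^ 2)) (hc : c = t * (1 + c - c ^ 2)) :
    b = c := by
  have hunit : IsUnit (1 - t * (1 - b - c)) := by
    rw [isUnit_iff_constantCoeff]
    simp [ht]
  have hprod : (b - c) * (1 - t * (1 - b - c)) = 0 := by linear_combination hb - hc
  exact sub_eq_zero.mp (hunit.mul_left_eq_zero.mp hprod)

theorem mk_neg_one_pow_mul_fib_mul (R : Type*) [CommRing R] :
    (mk fun n => (-1 : R) ^ (n + 1) * Nat.fib n) * (1 + X - X ^ 2) = X := by
  ext n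
  rw [mul_sub, mul_add, mul_one, map_sub, map_add, coeff_mul_X_pow', coeff_X]
  rcases n with _ | _ | k
  · simp
  · simp [coeff_succ_mul_X]
  · rw [coeff_succ_mul_X, if_pos (by omega), if_neg (by omega), show k + 1 + 1 - 2 = k by omega,
      coeff_mk, coeff_mk, coeff_mk, Nat.fib_add_two]
    push_cast
    ring

end PowerSeries

open PowerSeries

theorem PSComp_eq_subst {g : ℤ⟦X⟧} (hg : constantCoeff g = 0) (f : ℤ⟦X⟧) :
    PSComp f g = f.subst g := by
  ext n
  rw [PSComp, coeff_mk, coeff_subst' (HasSubst.of_constantCoeff_zero' hg),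
    finsum_eq_sum_of_support_subset _ (s := Finset.range (n + 1)), map_sum]
  · simp only [coeff_C_mul, smul_eq_mul]
  · intro k hk
    rw [Function.mem_support] at hk
    rw [Finset.coe_range, Set.mem_Iio]
    by_contra h
    exact hk (by rw [coeff_pow_eq_zero_of_lt hg (by omega), smul_zero])

open PowerSeries in
theorem stmt_17_general (S : PowerSeries ℤ)
    (hS : S = 1 + X * S - X ^ 2 * S ^ 2) :
    PSComp (X * S)
      (PowerSeries.mk fun n => if n = 0 then 0 else (-1) ^ (n + 1) * (Nat.fib n : ℤ)) = X := by
  set T : ℤ⟦X⟧ := mk fun n => (-1) ^ (n + 1) * (Nat.fib n : ℤ) with hT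
  have hTmk : (mk fun n => if n = 0 then 0 else (-1) ^ (n + 1) * (Nat.fib n : ℤ)) = T := by
    congr 1
    funext n
    split_ifs with hn <;> simp [hn]
  have hT0 : constantCoeff T = 0 := by simp [hT, ← coeff_zero_eq_constantCoeff_apply]
  have hTsubst : HasSubst T := HasSubst.of_constantCoeff_zero' hT0
  let φ : ℤ⟦X⟧ →ₐ[ℤ] ℤ⟦X⟧ := substAlgHom hTsubst
  have hφX : φ X = T := by simp [φ, coe_substAlgHom, subst_X hTsubst]
  have hX : X = T * (1 + X - X ^ 2) := (mk_neg_one_pow_mul_fib_mul ℤ).symm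
  rw [hTmk, PSComp_eq_subst hT0, ← coe_substAlgHom hTsubst]
  refine eq_of_eq_mul_one_add_sub_sq hT0 ?_ hX
  calc φ (X * S) = T * φ (1 + X * S - X ^ 2 * S ^ 2) := by rw [map_mul, hφX, ← hS]
    _ = T * (1 + φ (X * S) - φ (X * S) ^ 2) := by
      simp only [map_sub, map_add, map_one, map_mul, map_pow]
      ring

open PowerSeries in
theorem stmt_17 (S : PowerSeries ℤ) (hconst : constantCoeff S = 1)
    (hS : S = 1 + X * S - X ^ 2 * S ^ 2) :
    PSComp (X * S)
      (PowerSeries.mk fun n => if n = 0 then 0 else (-1) ^ (n + 1) * (Nat.fib n : ℤ)) = X :=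
  stmt_17_general S hS
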